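/- arXiv:1611.04432 — 6 statements merged into one kernel-verified Lean document; each statement's English description precedes it below -/
import Mathlib

section
/- Let α ∈ (1/2, 1] and let (ε_n)_{n≥1} be an arbitrary sequence with ε_n ∈ {−1, +1}. Define a(y) = Σ_{n≥1} ε_n · e^n · n^{−α} · 1_{[e^n, ∞)}(y) for y > 1. Then ∫_1^∞ |a(y)| · y^{−2} dy = ∞. -/
open MeasureTheory Filter

/-!
On the block `[e^(n+1), e^(n+2))` the function `a` is constant, equal to the partial sum `S_n` of
the jumps, so the block contributes at least a fixed multiple of `|S_n| e^(-n)` to the integral.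
Consecutive partial sums differ by the jump `e^(n+2) (n+2)^(-α)`, hence
`|S_n| + |S_(n+1)| ≥ e^(n+2) (n+2)^(-α)`, whatever the signs: two consecutive blocks together
contribute `≫ (n+2)^(-α)`, and this series diverges for `α ≤ 1`.
-/

/-- The step function `a(y) = Σ_{n≥1} ε_n · e^n · n^{-α} · 1_{[e^n, ∞)}(y)`
(indexed here by `n+1`, `n : ℕ`, so that the sum runs over `n ≥ 1`). -/
noncomputable def stepA (α : ℝ) (ε : ℕ → ℝ) (y : ℝ) : ℝ :=
  ∑' n : ℕ, ε (n + 1) * Real.exp (n + 1) * ((n : ℝ) + 1) ^ (-α) *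
    Set.indicator (Set.Ici (Real.exp (n + 1))) (fun _ => (1 : ℝ)) y

open Set

lemma tsum_mul_indicator_Ici_eq_sum_range {x : ℕ → ℝ} (hx : Monotone x) (c : ℕ → ℝ) {M : ℕ}
    {y : ℝ} (hy : y ∈ Ico (x M) (x (M + 1))) :
    ∑' n, c n * (Ici (x n)).indicator (fun _ => (1 : ℝ)) y = ∑ n ∈ Finset.range (M + 1), c n := by
  rw [tsum_eq_sum (s := Finset.range (M + 1))]
  · refine Finset.sum_congr rfl fun n hn => ?_
    rw [indicator_of_mem (mem_Ici.2 ((hx (Finset.mem_range_succ_iff.1 hn)).trans hy.1)), mul_one]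
  · intro n hn
    have hyn : y ∉ Ici (x n) := fun h =>
      (hy.2.trans_le (hx (not_lt.1 (Finset.mem_range.not.1 hn)))).not_ge h
    rw [indicator_of_notMem hyn, mul_zero]

lemma tsum_setLIntegral_Ico_le {x : ℕ → ℝ} (hx : Monotone x) (f : ℝ → ENNReal) (μ : Measure ℝ) :
    ∑' n, ∫⁻ y in Ico (x n) (x (n + 1)), f y ∂μ ≤ ∫⁻ y in Ici (x 0), f y ∂μ := by
  have hdisj : Pairwise (Function.onFun Disjoint fun n => Ico (x n) (x (n + 1))) :=
    hx.pairwise_disjoint_on_Ico_succ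
  rw [← lintegral_iUnion (fun n => measurableSet_Ico) hdisj]
  exact lintegral_mono_set <| iUnion_subset fun n =>
    Ico_subset_Ici_self.trans (Ici_subset_Ici.2 (hx n.zero_le))

lemma ofReal_le_setLIntegral_Ico_div_sq {g : ℝ → ℝ} {a b C : ℝ} (ha : 0 < a) (hC : 0 ≤ C)
    (hg : ∀ y ∈ Ico a b, C ≤ g y) :
    ENNReal.ofReal (C * (b - a) / b ^ 2) ≤ ∫⁻ y in Ico a b, ENNReal.ofReal (g y / y ^ 2) := by
  calc ENNReal.ofReal (C * (b - a) / b ^ 2) = ∫⁻ _ in Ico a b, ENNReal.ofReal (C / b ^ 2) := by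
        rw [setLIntegral_const, Real.volume_Ico, ← ENNReal.ofReal_mul (by positivity)]
        ring_nf
    _ ≤ ∫⁻ y in Ico a b, ENNReal.ofReal (g y / y ^ 2) :=
        setLIntegral_mono' measurableSet_Ico fun y hy => ENNReal.ofReal_le_ofReal <|
          div_le_div₀ (hC.trans (hg y hy)) (hg y hy) (pow_pos (ha.trans_le hy.1) 2)
            (pow_le_pow_left₀ (ha.trans_le hy.1).le hy.2.le 2)

lemma tsum_ofReal_eq_top_of_not_summable {f : ℕ → ℝ} (hf : ∀ n, 0 ≤ f n) (h : ¬Summable f) :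
    ∑' n, ENNReal.ofReal (f n) = ⊤ := by
  contrapose! h
  have := NNReal.summable_coe.2 (ENNReal.tsum_coe_ne_top_iff_summable.1 h)
  simpa only [Real.coe_toNNReal _ (hf _)] using this

lemma not_summable_of_le_add_succ {f g : ℕ → ℝ} (hg : ∀ n, 0 ≤ g n)
    (hgf : ∀ n, g n ≤ f n + f (n + 1)) (hg' : ¬Summable g) : ¬Summable f := fun hf =>
  hg' <| .of_nonneg_of_le hg hgf (hf.add ((summable_nat_add_iff 1).2 hf))

lemma not_summable_natCast_add_two_rpow {p : ℝ} (hp : -1 ≤ p) :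
    ¬Summable fun n : ℕ => ((n : ℝ) + 2) ^ p := by
  have hshift : (fun n : ℕ => ((n : ℝ) + 2) ^ p) = fun n => ((n + 2 : ℕ) : ℝ) ^ p := by
    simp only [Nat.cast_add, Nat.cast_ofNat]
  rw [hshift, summable_nat_add_iff 2 (f := fun n : ℕ => (n : ℝ) ^ p), Real.summable_nat_rpow]
  exact not_lt.2 hp

lemma monotone_exp_natCast_add_one : Monotone fun n : ℕ => Real.exp (n + 1) :=
  fun _ _ h => Real.exp_le_exp.2 (by exact_mod_cast Nat.add_le_add_right h 1)

noncomputable def stepAJump (α : ℝ) (ε : ℕ → ℝ) (n : ℕ) : ℝ :=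
  ε (n + 1) * Real.exp (n + 1) * ((n : ℝ) + 1) ^ (-α)

/-- The value of `stepA α ε` on `[e^(n+1), e^(n+2))`. -/
noncomputable def stepASum (α : ℝ) (ε : ℕ → ℝ) (n : ℕ) : ℝ :=
  ∑ k ∈ Finset.range (n + 1), stepAJump α ε k

lemma stepA_eq_stepASum {α : ℝ} {ε : ℕ → ℝ} {n : ℕ} {y : ℝ}
    (hy : y ∈ Ico (Real.exp (n + 1)) (Real.exp ((n + 1 : ℕ) + 1))) :
    stepA α ε y = stepASum α ε n :=
  tsum_mul_indicator_Ici_eq_sum_range monotone_exp_natCast_add_one _ hy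

lemma abs_stepAJump {α : ℝ} {ε : ℕ → ℝ} (hε : ∀ n : ℕ, 1 ≤ n → ε n = 1 ∨ ε n = -1) (n : ℕ) :
    |stepAJump α ε n| = Real.exp (n + 1) * ((n : ℝ) + 1) ^ (-α) := by
  have h : |ε (n + 1)| = 1 := by rcases hε (n + 1) n.succ_pos with h | h <;> simp [h]
  rw [stepAJump, mul_assoc, abs_mul, h, one_mul, abs_of_pos (by positivity)]

lemma ofReal_le_setLIntegral_stepA (α : ℝ) (ε : ℕ → ℝ) (n : ℕ) :
    ENNReal.ofReal ((1 - Real.exp (-1)) * (|stepASum α ε n| / Real.exp (n + 2))) ≤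
      ∫⁻ y in Ico (Real.exp (n + 1)) (Real.exp ((n + 1 : ℕ) + 1)),
        ENNReal.ofReal (|stepA α ε y| / y ^ 2) := by
  convert ofReal_le_setLIntegral_Ico_div_sq (Real.exp_pos _) (abs_nonneg _)
    fun y hy => (congrArg abs (stepA_eq_stepASum hy)).ge using 2
  push_cast
  rw [show (n : ℝ) + 2 = n + 1 + 1 by ring, Real.exp_add _ 1, Real.exp_neg]
  field_simp

lemma exp_neg_one_mul_rpow_le (α : ℝ) {ε : ℕ → ℝ}
    (hε : ∀ n : ℕ, 1 ≤ n → ε n = 1 ∨ ε n = -1) (n : ℕ) :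
    Real.exp (-1) * ((n : ℝ) + 2) ^ (-α) ≤
      |stepASum α ε n| / Real.exp (n + 2) + |stepASum α ε (n + 1)| / Real.exp ((n + 1 : ℕ) + 2) := by
  have hjump : Real.exp (n + 2) * ((n : ℝ) + 2) ^ (-α) ≤
      |stepASum α ε n| + |stepASum α ε (n + 1)| := by
    have h := abs_stepAJump (α := α) hε (n + 1)
    have hsub : stepAJump α ε (n + 1) = stepASum α ε (n + 1) - stepASum α ε n := by
      simp [stepASum, Finset.sum_range_succ _ (n + 1)]
    push_cast at h
    rw [show (n : ℝ) + 2 = n + 1 + 1 by ring, ← h, hsub]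
    exact (abs_sub _ _).trans_eq (add_comm _ _)
  have hexp : Real.exp (n + 1 + 2) = Real.exp (n + 2) * Real.exp 1 := by
    rw [← Real.exp_add]; ring_nf
  push_cast
  calc Real.exp (-1) * ((n : ℝ) + 2) ^ (-α)
      = Real.exp (n + 2) * ((n : ℝ) + 2) ^ (-α) / Real.exp (n + 1 + 2) := by
        rw [hexp, Real.exp_neg]; field_simp
    _ ≤ (|stepASum α ε n| + |stepASum α ε (n + 1)|) / Real.exp (n + 1 + 2) := by gcongr
    _ ≤ |stepASum α ε n| / Real.exp (n + 2) + |stepASum α ε (n + 1)| / Real.exp (n + 1 + 2) := by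
        rw [add_div]; gcongr; linarith

theorem diamond_integral_diverges_general (α : ℝ) (hα₂ : α ≤ 1)
    (ε : ℕ → ℝ) (hε : ∀ n : ℕ, 1 ≤ n → ε n = 1 ∨ ε n = -1) :
    ∫⁻ y in Set.Ioi (1 : ℝ), ENNReal.ofReal (|stepA α ε y| / y ^ 2) = ⊤ := by
  have hk : 0 < 1 - Real.exp (-1) := sub_pos.2 (Real.exp_lt_one_iff.2 (by norm_num))
  have hw : ¬Summable fun n : ℕ => (1 - Real.exp (-1)) * (|stepASum α ε n| / Real.exp (n + 2)) := by
    rw [summable_mul_left_iff hk.ne']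
    refine not_summable_of_le_add_succ (fun n => by positivity) (exp_neg_one_mul_rpow_le α hε) ?_
    rw [summable_mul_left_iff (Real.exp_pos _).ne']
    exact not_summable_natCast_add_two_rpow (neg_le_neg hα₂)
  refine top_le_iff.1 ?_
  calc ⊤ = ∑' n : ℕ, ENNReal.ofReal
          ((1 - Real.exp (-1)) * (|stepASum α ε n| / Real.exp (n + 2))) :=
        (tsum_ofReal_eq_top_of_not_summable (fun n => by positivity) hw).symm
    _ ≤ ∑' n : ℕ, ∫⁻ y in Ico (Real.exp (n + 1)) (Real.exp ((n + 1 : ℕ) + 1)),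
          ENNReal.ofReal (|stepA α ε y| / y ^ 2) :=
        ENNReal.tsum_le_tsum (ofReal_le_setLIntegral_stepA α ε)
    _ ≤ ∫⁻ y in Ici (Real.exp ((0 : ℕ) + 1)), ENNReal.ofReal (|stepA α ε y| / y ^ 2) :=
        tsum_setLIntegral_Ico_le monotone_exp_natCast_add_one _ _
    _ ≤ ∫⁻ y in Ioi 1, ENNReal.ofReal (|stepA α ε y| / y ^ 2) :=
        lintegral_mono_set (Ici_subset_Ioi.2 (by simp))

/-- For `1/2 < α ≤ 1` and any choice of signs `ε_n ∈ {−1, +1}`, Diamond's integral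
`∫_1^∞ |a(y)| y⁻² dy` diverges for `a(y) = Σ_{n≥1} ε_n e^n n^{-α} 1_{[e^n,∞)}(y)`. -/
theorem diamond_integral_diverges (α : ℝ) (hα₁ : 1 / 2 < α) (hα₂ : α ≤ 1)
    (ε : ℕ → ℝ) (hε : ∀ n : ℕ, 1 ≤ n → ε n = 1 ∨ ε n = -1) :
    ∫⁻ y in Set.Ioi (1 : ℝ), ENNReal.ofReal (|stepA α ε y| / y ^ 2) = ⊤ :=
  diamond_integral_diverges_general α hα₂ ε hε
end

section
/- Let S be a set of (usual) prime numbers with Σ_{p∈S} 1/p < ∞. Then the set of positive integers having no prime factor in S has natural density ∏_{p∈S} (1 − 1/p): that is, (1/x)·#{ n : 1 ≤ n ≤ x and no p ∈ S divides n } → ∏_{p∈S} (1 − 1/p) as x → ∞, and this product lies in (0, 1]. -/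
/-!
For a finite set `F` of primes with product `m`, having no prime factor in `F` means being coprime
to `m`, a condition periodic modulo `m` with `φ m / m = ∏_{p ∈ F} (1 - 1/p)`; hence the count up to
`N` is `N ∏_{p ∈ F} (1 - 1/p) + O(m)`. Replacing `F ⊆ S` by `S` only removes multiples of primes in
`S \ F`, at most `N ∑_{p ∈ S \ F} 1/p` of them, which is a small proportion of `N` once `F` exhausts
all but a tail of the convergent series. The infinite product equals `exp (∑ log (1 - 1/p))`, so it
lies in `(0, 1]`.
-/

open Filter Finset Topology

lemma tendsto_of_forall_exists_dist_lt {α X : Type*} [PseudoMetricSpace X] {l : Filter α}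
    {u : α → X} {L : X} (h : ∀ ε > 0, ∃ ρ, dist ρ L < ε ∧ ∀ᶠ a in l, dist (u a) ρ < ε) :
    Tendsto u l (𝓝 L) := by
  refine Metric.tendsto_nhds.2 fun ε hε => ?_
  obtain ⟨ρ, hρL, hu⟩ := h (ε / 2) (half_pos hε)
  filter_upwards [hu] with a ha
  linarith [dist_triangle (u a) ρ L]

lemma tprod_one_sub_eq_exp_tsum_log {ι : Type*} {f : ι → ℝ} (hf : Summable f)
    (hf_lt : ∀ i, f i < 1) : ∏' i, (1 - f i) = Real.exp (∑' i, Real.log (1 - f i)) := by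
  refine (Real.rexp_tsum_eq_tprod (fun i => sub_pos.2 (hf_lt i)) ?_).symm
  simpa only [sub_eq_add_neg] using Real.summable_log_one_add_of_summable hf.neg

lemma tprod_one_sub_pos {ι : Type*} {f : ι → ℝ} (hf : Summable f) (hf_lt : ∀ i, f i < 1) :
    0 < ∏' i, (1 - f i) := by
  rw [tprod_one_sub_eq_exp_tsum_log hf hf_lt]
  exact Real.exp_pos _

lemma tprod_one_sub_le_one {ι : Type*} {f : ι → ℝ} (hf : Summable f) (hf_nonneg : ∀ i, 0 ≤ f i)
    (hf_lt : ∀ i, f i < 1) : ∏' i, (1 - f i) ≤ 1 := by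
  rw [tprod_one_sub_eq_exp_tsum_log hf hf_lt, Real.exp_le_one_iff]
  exact tsum_nonpos fun i =>
    Real.log_nonpos (sub_nonneg.2 (hf_lt i).le) (sub_le_self _ (hf_nonneg i))

lemma tendsto_floor_div_of_tendsto_div {u : ℕ → ℝ} {L : ℝ}
    (h : Tendsto (fun N : ℕ => u N / N) atTop (𝓝 L)) :
    Tendsto (fun x : ℝ => u ⌊x⌋₊ / x) atTop (𝓝 L) := by
  have h' := (h.comp tendsto_nat_floor_atTop).mul tendsto_nat_floor_div_atTop
  rw [mul_one] at h'
  refine h'.congr' ?_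
  filter_upwards [eventually_ge_atTop 1] with x hx
  have hfloor : (⌊x⌋₊ : ℝ) ≠ 0 := Nat.cast_ne_zero.2 (Nat.floor_pos.2 hx).ne'
  simp only [Function.comp_apply]
  field_simp

namespace Nat

lemma card_filter_coprime_Ico_add_mul (m a q : ℕ) :
    #{x ∈ Ico a (a + q * m) | m.Coprime x} = q * m.totient := by
  induction q with
  | zero => simp
  | succ q ih =>
    have hsplit :
        Ico a (a + (q + 1) * m) = Ico a (a + q * m) ∪ Ico (a + q * m) (a + q * m + m) := by
      rw [Ico_union_Ico_eq_Ico le_self_add le_self_add]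
      ring_nf
    rw [hsplit, filter_union, card_union_of_disjoint, ih, filter_coprime_Ico_eq_totient, add_mul,
      one_mul]
    exact (Ico_disjoint_Ico_consecutive _ _ _).mono (filter_subset _ _) (filter_subset _ _)

lemma abs_card_filter_coprime_Icc_sub_le (m N : ℕ) (hm : 0 < m) :
    |(#{n ∈ Icc 1 N | m.Coprime n} : ℝ) - N * (m.totient / m)| ≤ m := by
  set q := N / m
  have hqN : q * m ≤ N := div_mul_le_self N m
  have hNq : N < (q + 1) * m := by rw [add_mul, one_mul]; exact lt_div_mul_add hm
  have hcount (k : ℕ) : #{n ∈ Ico 1 (1 + k * m) | m.Coprime n} = k * m.totient :=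
    card_filter_coprime_Ico_add_mul m 1 k
  have hlower : q * m.totient ≤ #{n ∈ Icc 1 N | m.Coprime n} := by
    rw [← hcount]
    exact card_le_card <| filter_subset_filter _ fun n hn => by
      simp only [mem_Ico, mem_Icc] at hn ⊢; omega
  have hupper : #{n ∈ Icc 1 N | m.Coprime n} ≤ (q + 1) * m.totient := by
    rw [← hcount]
    exact card_le_card <| filter_subset_filter _ fun n hn => by
      simp only [mem_Ico, mem_Icc] at hn ⊢; omega
  have hmR : (0 : ℝ) < m := by exact_mod_cast hm
  have hφ : (m.totient : ℝ) ≤ m := by exact_mod_cast totient_le m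
  have hφ0 : (0 : ℝ) ≤ m.totient := by positivity
  have hqN' : (q : ℝ) * m ≤ N := by exact_mod_cast hqN
  have hNq' : (N : ℝ) ≤ (q + 1) * m := by exact_mod_cast hNq.le
  have hlower' : (q : ℝ) * m.totient ≤ #{n ∈ Icc 1 N | m.Coprime n} := by exact_mod_cast hlower
  have hupper' : (#{n ∈ Icc 1 N | m.Coprime n} : ℝ) ≤ (q + 1) * m.totient := by
    exact_mod_cast hupper
  have hdiv : (#{n ∈ Icc 1 N | m.Coprime n} : ℝ) - N * (m.totient / m) =
      (#{n ∈ Icc 1 N | m.Coprime n} * m - N * m.totient) / m := by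
    field_simp
  rw [hdiv, abs_le, le_div_iff₀ hmR, div_le_iff₀ hmR]
  constructor <;> nlinarith

lemma totient_prod_of_prime (F : Finset ℕ) (hF : ∀ p ∈ F, p.Prime) :
    ((∏ p ∈ F, p).totient : ℝ) = (∏ p ∈ F, p : ℕ) * ∏ p ∈ F, (1 - 1 / (p : ℝ)) := by
  have h := congrArg (Rat.cast : ℚ → ℝ) (totient_eq_mul_prod_factors (∏ p ∈ F, p))
  rw [primeFactors_prod hF] at h
  push_cast at h
  simpa only [one_div, cast_prod] using h

end Nat

open scoped Classical in
noncomputable def sieveCount (S : Set ℕ) (N : ℕ) : ℕ := #{n ∈ Icc 1 N | ∀ p ∈ S, ¬ p ∣ n}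

lemma sieveCount_coe_finset (F : Finset ℕ) (hF : ∀ p ∈ F, p.Prime) (N : ℕ) :
    sieveCount F N = #{n ∈ Icc 1 N | (∏ p ∈ F, p).Coprime n} := by
  unfold sieveCount
  congr 1
  ext n
  simp only [mem_filter, mem_coe, Nat.coprime_prod_left_iff]
  exact and_congr_right fun _ => forall₂_congr fun p hp => ((hF p hp).coprime_iff_not_dvd).symm

lemma abs_sieveCount_coe_finset_sub_le (F : Finset ℕ) (hF : ∀ p ∈ F, p.Prime) (N : ℕ) :
    |(sieveCount F N : ℝ) - N * ∏ p ∈ F, (1 - 1 / (p : ℝ))| ≤ ∏ p ∈ F, p := by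
  have hm : 0 < ∏ p ∈ F, p := prod_pos fun p hp => (hF p hp).pos
  have hm' : ((∏ p ∈ F, p : ℕ) : ℝ) ≠ 0 := by positivity
  have h := Nat.abs_card_filter_coprime_Icc_sub_le _ N hm
  rwa [Nat.totient_prod_of_prime F hF, mul_div_cancel_left₀ _ hm', ← sieveCount_coe_finset F hF]
    at h

open scoped Classical in
lemma sieveCount_anti {S T : Set ℕ} (hTS : T ⊆ S) (N : ℕ) : sieveCount S N ≤ sieveCount T N := by
  unfold sieveCount
  refine card_le_card (monotone_filter_right _ ?_)
  exact fun n _ h p hp => h p (hTS hp)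

open scoped Classical in
lemma sieveCount_le_add_sum (S T : Set ℕ) (N : ℕ) :
    (sieveCount T N : ℝ) ≤ sieveCount S N + N * ∑ p ∈ Icc 1 N with p ∈ S \ T, 1 / (p : ℝ) := by
  set G := {p ∈ Icc 1 N | p ∈ S \ T}
  have hcover : {n ∈ Icc 1 N | ∀ p ∈ T, ¬ p ∣ n} ⊆
      {n ∈ Icc 1 N | ∀ p ∈ S, ¬ p ∣ n} ∪ G.biUnion fun p => {n ∈ Icc 1 N | p ∣ n} := by
    intro n hn
    simp only [mem_filter, mem_Icc] at hn
    by_cases hS : ∀ p ∈ S, ¬ p ∣ n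
    · exact mem_union_left _ (mem_filter.2 ⟨mem_Icc.2 hn.1, hS⟩)
    push Not at hS
    obtain ⟨p, hpS, hpn⟩ := hS
    have hpN : p ≤ N := (Nat.le_of_dvd hn.1.1 hpn).trans hn.1.2
    have hp1 : 1 ≤ p := Nat.pos_of_dvd_of_pos hpn hn.1.1
    refine mem_union_right _ (mem_biUnion.2 ⟨p, ?_, ?_⟩)
    · exact mem_filter.2 ⟨mem_Icc.2 ⟨hp1, hpN⟩, hpS, fun hpT => hn.2 p hpT hpn⟩
    · exact mem_filter.2 ⟨mem_Icc.2 hn.1, hpn⟩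
  have hcount : sieveCount T N ≤ sieveCount S N + ∑ p ∈ G, N / p := by
    calc sieveCount T N ≤ sieveCount S N + #(G.biUnion fun p => {n ∈ Icc 1 N | p ∣ n}) :=
          (card_le_card hcover).trans (card_union_le _ _)
      _ ≤ sieveCount S N + ∑ p ∈ G, N / p := by
          gcongr
          refine card_biUnion_le.trans_eq (sum_congr rfl fun p _ => ?_)
          exact Nat.Ioc_filter_dvd_card_eq_div N p
  calc (sieveCount T N : ℝ) ≤ sieveCount S N + ∑ p ∈ G, ((N / p : ℕ) : ℝ) := by
        exact_mod_cast hcount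
    _ ≤ sieveCount S N + N * ∑ p ∈ G, 1 / (p : ℝ) := by
        rw [mul_sum]
        gcongr with p
        rw [mul_one_div]
        exact Nat.cast_div_le

open scoped Classical in
lemma abs_sieveCount_sub_le {S : Set ℕ} {F : Finset ℕ} (hFS : ↑F ⊆ S) (hF : ∀ p ∈ F, p.Prime)
    (N : ℕ) :
    |(sieveCount S N : ℝ) - N * ∏ p ∈ F, (1 - 1 / (p : ℝ))| ≤
      ∏ p ∈ F, p + N * ∑ p ∈ Icc 1 N with p ∈ S \ ↑F, 1 / (p : ℝ) := by
  have hF_count := abs_sieveCount_coe_finset_sub_le F hF N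
  have hle : (sieveCount S N : ℝ) ≤ sieveCount F N := by exact_mod_cast sieveCount_anti hFS N
  have hge : (sieveCount F N : ℝ) ≤
      sieveCount S N + N * ∑ p ∈ Icc 1 N with p ∈ S \ ↑F, 1 / (p : ℝ) := by
    -- `convert` only reconciles the decidability instances of `· ∈ S \ ↑F`
    convert sieveCount_le_add_sum S F N
  have htail : 0 ≤ (N : ℝ) * ∑ p ∈ Icc 1 N with p ∈ S \ ↑F, 1 / (p : ℝ) := by positivity
  rw [abs_le] at hF_count ⊢
  constructor <;> linarith [hF_count.1, hF_count.2]

theorem tendsto_sieveCount_div {S : Set ℕ} (hS : ∀ p ∈ S, p.Prime)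
    (hsum : Summable fun p : S => (1 : ℝ) / (p : ℕ)) :
    Tendsto (fun N : ℕ => (sieveCount S N : ℝ) / N) atTop
      (𝓝 (∏' p : S, (1 - 1 / ((p : ℕ) : ℝ)))) := by
  classical
  have hsum' : Summable (S.indicator fun p : ℕ => (1 : ℝ) / p) :=
    summable_subtype_iff_indicator.1 hsum
  have hprod : HasProd (S.mulIndicator fun p : ℕ => 1 - (1 : ℝ) / p)
      (∏' p : S, (1 - 1 / ((p : ℕ) : ℝ))) := by
    rw [← hasProd_subtype_iff_mulIndicator]
    simpa only [Function.comp_def, sub_eq_add_neg] using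
      (Real.multipliable_one_add_of_summable hsum.neg).hasProd
  refine tendsto_of_forall_exists_dist_lt fun ε hε => ?_
  obtain ⟨F₀, hF₀⟩ := summable_iff_vanishing_norm.1 hsum' (ε / 2) (half_pos hε)
  obtain ⟨F₁, hF₁⟩ := eventually_atTop.1 (hprod (Metric.ball_mem_nhds _ hε))
  set F := {p ∈ F₀ ∪ F₁ | p ∈ S}
  have hFS : ↑F ⊆ S := fun p hp => (mem_filter.1 hp).2
  refine ⟨∏ p ∈ F, (1 - 1 / (p : ℝ)), ?_, ?_⟩
  · simpa only [Metric.mem_ball, Set.mulIndicator_apply, ← prod_filter] using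
      hF₁ (F₀ ∪ F₁) subset_union_right
  have htail (N : ℕ) : ∑ p ∈ Icc 1 N with p ∈ S \ ↑F, 1 / (p : ℝ) < ε / 2 := by
    have hdisj : Disjoint {p ∈ Icc 1 N | p ∈ S \ ↑F} F₀ := disjoint_left.2 fun p hp hp₀ =>
      (mem_filter.1 hp).2.2 (mem_filter.2 ⟨mem_union_left _ hp₀, (mem_filter.1 hp).2.1⟩)
    have h := hF₀ _ hdisj
    rwa [sum_congr rfl fun p hp => Set.indicator_of_mem (mem_filter.1 hp).2.1 _,
      Real.norm_of_nonneg (by positivity)] at h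
  filter_upwards [(tendsto_const_div_atTop_nhds_zero_nat ((∏ p ∈ F, p : ℕ) : ℝ)).eventually
    (gt_mem_nhds (half_pos hε)), eventually_gt_atTop 0] with N hN hN0
  have hNR : (0 : ℝ) < N := by exact_mod_cast hN0
  have h := abs_sieveCount_sub_le hFS (fun p hp => hS p (hFS hp)) N
  rw [Real.dist_eq, div_sub' hNR.ne', abs_div, abs_of_pos hNR, div_lt_iff₀ hNR]
  rw [div_lt_iff₀ hNR] at hN
  nlinarith [htail N]

lemma natCard_setOf_eq_sieveCount_floor (S : Set ℕ) {x : ℝ} (hx : 0 ≤ x) :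
    Nat.card {n : ℕ | 1 ≤ n ∧ (n : ℝ) ≤ x ∧ ∀ p ∈ S, ¬ p ∣ n} = sieveCount S ⌊x⌋₊ := by
  classical
  have hset : {n : ℕ | 1 ≤ n ∧ (n : ℝ) ≤ x ∧ ∀ p ∈ S, ¬ p ∣ n} =
      ↑({n ∈ Icc 1 ⌊x⌋₊ | ∀ p ∈ S, ¬ p ∣ n}) := by
    ext n
    simp [Nat.le_floor_iff hx, and_assoc]
  rw [hset, Nat.card_coe_set_eq, Set.ncard_coe_finset, sieveCount]

/-- If `S` is a set of primes with `Σ_{p∈S} 1/p < ∞`, then the positive integers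
with no prime factor in `S` have natural density `∏_{p∈S} (1 - 1/p) ∈ (0, 1]`. -/
theorem density_of_deleted_primes (S : Set ℕ) (hS : ∀ p ∈ S, Nat.Prime p)
    (hsum : Summable (fun p : S => (1 : ℝ) / (p : ℕ))) :
    0 < (∏' p : S, (1 - 1 / ((p : ℕ) : ℝ))) ∧
    (∏' p : S, (1 - 1 / ((p : ℕ) : ℝ))) ≤ 1 ∧
    Tendsto (fun x : ℝ =>
        (Nat.card {n : ℕ | 1 ≤ n ∧ (n : ℝ) ≤ x ∧ ∀ p ∈ S, ¬ p ∣ n} : ℝ) / x)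
      atTop (nhds (∏' p : S, (1 - 1 / ((p : ℕ) : ℝ)))) := by
  have hrecip_lt (p : S) : 1 / ((p : ℕ) : ℝ) < 1 := by
    rw [div_lt_one (by exact_mod_cast (hS p p.2).pos)]
    exact_mod_cast (hS p p.2).one_lt
  refine ⟨tprod_one_sub_pos hsum hrecip_lt,
    tprod_one_sub_le_one hsum (fun p => by positivity) hrecip_lt, ?_⟩
  refine (tendsto_floor_div_of_tendsto_div (tendsto_sieveCount_div hS hsum)).congr' ?_
  filter_upwards [eventually_ge_atTop 0] with x hx
  rw [natCard_setOf_eq_sieveCount_floor S hx]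
end

section
/- Let (q_i)_{i∈ℕ} be a sequence of reals with q_i > 1 for all i, the q_i pairwise distinct, and Σ_i 1/q_i < ∞. For x ≥ 1 let N(x) be the number of pairs (n, m) where n is a positive integer and m : ℕ → ℕ is finitely supported, such that n · ∏_i q_i^{m_i} ≤ x. Then N(x) is finite for every x and N(x)/x → ∏_i (1 − 1/q_i)^{−1} as x → ∞, and this product lies in (0, ∞). -/
open Filter

/-- The generalized integers generated by the usual positive integers together with
the extra generators `q_i`, counted with multiplicity up to `x`: the set of pairs
`(n, m)` with `n ≥ 1`, `m : ℕ →₀ ℕ` finitely supported, and `n · ∏_i q_i^{m_i} ≤ x`. -/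
def genInt (q : ℕ → ℝ) (x : ℝ) : Set (ℕ × (ℕ →₀ ℕ)) :=
  {p | 1 ≤ p.1 ∧ (p.1 : ℝ) * (p.2.prod fun i k => q i ^ k) ≤ x}

/-! Sorting the generalized integers `n · P(m)`, `P(m) = ∏ q_i^{m_i}`, by their `q`-part `m` gives
`N(x) = ∑_m ⌊x / P(m)⌋`, so `N(x)/x → ∑_m 1/P(m)` by dominated convergence, each term being
at most `1/P(m)`. That series is the Euler product `∏_i (1 - 1/q_i)⁻¹`: over finitely many
generators it is a product of geometric series, and the infinite product converges because
`∑_i 1/q_i < ∞`. -/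

namespace Finsupp

variable {ι M : Type*} [AddCommMonoid M]

noncomputable def supportSubsetInsertEquiv [DecidableEq ι] {a : ι} {s : Finset ι} (ha : a ∉ s) :
    {m : ι →₀ M // m.support ⊆ insert a s} ≃ M × {m : ι →₀ M // m.support ⊆ s} where
  toFun m := (m.1 a, ⟨m.1.erase a, by simpa [support_erase, Finset.subset_insert_iff] using m.2⟩)
  invFun p := ⟨single a p.1 + p.2.1, support_add.trans <| Finset.union_subset_union
    support_single_subset p.2.2⟩
  left_inv m := Subtype.ext <| single_add_erase a m.1
  right_inv := by
    rintro ⟨k, m, hm⟩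
    have ha' : a ∉ m.support := fun h => ha (hm h)
    simp [notMem_support_iff.mp ha']

end Finsupp

section EulerProduct

variable {ι : Type*}

noncomputable def prodPow (r : ι → ℝ) (m : ι →₀ ℕ) : ℝ := m.prod fun i k => r i ^ k

variable {r : ι → ℝ}

theorem prodPow_zero : prodPow r 0 = 1 := Finsupp.prod_zero_index

theorem prodPow_nonneg (hr0 : ∀ i, 0 ≤ r i) (m : ι →₀ ℕ) : 0 ≤ prodPow r m :=
  Finset.prod_nonneg fun i _ => pow_nonneg (hr0 i) _

theorem prodPow_single_add (a : ι) (k : ℕ) (m : ι →₀ ℕ) :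
    prodPow r (Finsupp.single a k + m) = r a ^ k * prodPow r m := by
  rw [prodPow, Finsupp.prod_add_index' (fun _ => pow_zero _) (fun _ _ _ => pow_add _ _ _),
    Finsupp.prod_single_index (h := fun i k => r i ^ k) (pow_zero _), prodPow]

theorem prodPow_one_div (q : ι → ℝ) (m : ι →₀ ℕ) :
    prodPow (fun i => 1 / q i) m = (m.prod fun i k => q i ^ k)⁻¹ := by
  simp only [prodPow, Finsupp.prod, one_div, inv_pow, Finset.prod_inv_distrib]

theorem hasSum_prodPow_support_subset (hr0 : ∀ i, 0 ≤ r i) (hr1 : ∀ i, r i < 1) (s : Finset ι) :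
    HasSum (fun m : {m : ι →₀ ℕ // m.support ⊆ s} => prodPow r m) (∏ i ∈ s, (1 - r i)⁻¹) := by
  classical
  induction s using Finset.induction_on with
  | empty =>
    rw [Finset.prod_empty, ← prodPow_zero (r := r)]
    refine hasSum_single (f := fun m : {m : ι →₀ ℕ // m.support ⊆ ∅} => prodPow r m)
      ⟨0, by simp⟩ fun m hm => (hm (Subtype.ext ?_)).elim
    simpa [Finset.subset_empty] using m.2
  | insert a s ha ih =>
    have hgeom : HasSum (fun k : ℕ => r a ^ k) (1 - r a)⁻¹ :=
      hasSum_geometric_of_lt_one (hr0 a) (hr1 a)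
    have hprod := hgeom.mul ih <| hgeom.summable.mul_of_nonneg ih.summable
      (fun k => pow_nonneg (hr0 a) k) (fun m => prodPow_nonneg hr0 m)
    rw [Finset.prod_insert ha, ← (Finsupp.supportSubsetInsertEquiv ha).symm.hasSum_iff]
    exact hprod.congr_fun fun p => prodPow_single_add a p.1 p.2

theorem multipliable_inv_one_sub (hr1 : ∀ i, r i < 1) (hr : Summable r) :
    Multipliable fun i => (1 - r i)⁻¹ := by
  refine Real.multipliable_of_summable_log (fun i => inv_pos.2 (sub_pos.2 (hr1 i))) ?_
  simpa [Real.log_inv, sub_eq_add_neg] using (Real.summable_log_one_add_of_summable hr.neg).neg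

theorem prod_le_tprod_of_one_le {f : ι → ℝ} (hf : Multipliable f) (h1 : ∀ i, 1 ≤ f i)
    (s : Finset ι) : ∏ i ∈ s, f i ≤ ∏' i, f i :=
  ge_of_tendsto hf.hasProd <| (eventually_ge_atTop s).mono fun _ hst =>
    Finset.prod_le_prod_of_subset_of_one_le hst (fun i _ => zero_le_one.trans (h1 i))
      fun i _ _ => h1 i

theorem sum_prodPow_le_tprod (hr0 : ∀ i, 0 ≤ r i) (hr1 : ∀ i, r i < 1) (hr : Summable r)
    (u : Finset (ι →₀ ℕ)) : ∑ m ∈ u, prodPow r m ≤ ∏' i, (1 - r i)⁻¹ := by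
  classical
  obtain ⟨s, hs⟩ : ∃ s : Finset ι, ∀ m ∈ u, m.support ⊆ s :=
    ⟨u.sup Finsupp.support, fun m hm => Finset.le_sup hm⟩
  calc ∑ m ∈ u, prodPow r m = ∑ m ∈ u.subtype (·.support ⊆ s), prodPow r m :=
        (Finset.sum_subtype_of_mem _ hs).symm
    _ ≤ ∏ i ∈ s, (1 - r i)⁻¹ :=
        sum_le_hasSum (hf := hasSum_prodPow_support_subset hr0 hr1 s) _
          fun m _ => prodPow_nonneg hr0 m
    _ ≤ ∏' i, (1 - r i)⁻¹ :=
        prod_le_tprod_of_one_le (multipliable_inv_one_sub hr1 hr)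
          (fun i => (one_le_inv₀ (sub_pos.2 (hr1 i))).2 (sub_le_self _ (hr0 i))) s

theorem summable_prodPow (hr0 : ∀ i, 0 ≤ r i) (hr1 : ∀ i, r i < 1) (hr : Summable r) :
    Summable (prodPow r) :=
  summable_of_sum_le (prodPow_nonneg hr0) (sum_prodPow_le_tprod hr0 hr1 hr)

theorem tsum_prodPow (hr0 : ∀ i, 0 ≤ r i) (hr1 : ∀ i, r i < 1) (hr : Summable r) :
    ∑' m, prodPow r m = ∏' i, (1 - r i)⁻¹ := by
  refine le_antisymm ((summable_prodPow hr0 hr1 hr).tsum_le_of_sum_le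
    (sum_prodPow_le_tprod hr0 hr1 hr)) ?_
  refine le_of_tendsto' (multipliable_inv_one_sub hr1 hr).hasProd fun s => ?_
  have hs := hasSum_prodPow_support_subset hr0 hr1 s
  rw [← hs.tsum_eq]
  exact (summable_prodPow hr0 hr1 hr).tsum_subtype_le _ {m | m.support ⊆ s} (prodPow_nonneg hr0)

end EulerProduct

section PointsBelow

variable {β : Type*}

def pointsBelow (w : β → ℝ) (x : ℝ) : Set (ℕ × β) :=
  {p | 1 ≤ p.1 ∧ (p.1 : ℝ) ≤ w p.2 * x}

variable {w : β → ℝ}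

theorem pointsBelow_eq_biUnion [DecidableEq β] {x : ℝ} {B : Finset β}
    (hB : ∀ b, 1 ≤ w b * x → b ∈ B) :
    pointsBelow w x = ↑(B.biUnion fun b => Finset.Icc 1 ⌊w b * x⌋₊ ×ˢ {b}) := by
  ext ⟨n, b⟩
  simp only [pointsBelow, Set.mem_ofPred_eq, Finset.coe_biUnion, Set.mem_iUnion, Finset.mem_coe,
    Finset.mem_product, Finset.mem_Icc, Finset.mem_singleton]
  constructor
  · rintro ⟨hn, hnx⟩
    have h1 : (1 : ℝ) ≤ n := by exact_mod_cast hn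
    exact ⟨b, hB b (h1.trans hnx), ⟨hn, (Nat.le_floor_iff' (by omega)).2 hnx⟩, rfl⟩
  · rintro ⟨b, -, ⟨hn, hnx⟩, rfl⟩
    exact ⟨hn, (Nat.le_floor_iff' (by omega)).1 hnx⟩

theorem finite_setOf_one_le_mul (hw : Summable w) (x : ℝ) : {b | 1 ≤ w b * x}.Finite := by
  simpa using eventually_cofinite.1 ((hw.mul_right x).tendsto_cofinite_zero.eventually_lt_const
    one_pos)

theorem finite_pointsBelow (hw : Summable w) (x : ℝ) : (pointsBelow w x).Finite := by
  classical
  rw [pointsBelow_eq_biUnion fun b hb => (finite_setOf_one_le_mul hw x).mem_toFinset.2 hb]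
  exact Finset.finite_toSet _

theorem card_pointsBelow (hw : Summable w) (x : ℝ) :
    (Nat.card (pointsBelow w x) : ℝ) = ∑' b, (⌊w b * x⌋₊ : ℝ) := by
  classical
  set B := (finite_setOf_one_le_mul hw x).toFinset
  have hB : ∀ b, 1 ≤ w b * x → b ∈ B := fun b hb =>
    (finite_setOf_one_le_mul hw x).mem_toFinset.2 hb
  rw [pointsBelow_eq_biUnion hB, Nat.card_coe_set_eq, Set.ncard_coe_finset, Finset.card_biUnion,
    tsum_eq_sum (s := B)]
  · simp
  · intro b hb
    rw [Nat.floor_eq_zero.2 (not_le.1 (mt (hB b) hb)), Nat.cast_zero]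
  · intro b _ b' _ hbb'
    exact Finset.disjoint_product.2 (.inr (Finset.disjoint_singleton.2 hbb'))

theorem tendsto_card_pointsBelow_div (hw0 : ∀ b, 0 ≤ w b) (hw : Summable w) :
    Tendsto (fun x => (Nat.card (pointsBelow w x) : ℝ) / x) atTop (nhds (∑' b, w b)) := by
  simp_rw [card_pointsBelow hw, ← tsum_div_const]
  refine tendsto_tsum_of_dominated_convergence hw (fun b => tendsto_nat_floor_mul_div_atTop (hw0 b))
    ((eventually_gt_atTop 0).mono fun x hx b => ?_)
  rw [Real.norm_of_nonneg (by positivity), div_le_iff₀ hx]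
  exact Nat.floor_le (mul_nonneg (hw0 b) hx.le)

end PointsBelow

theorem genInt_eq_pointsBelow {q : ℕ → ℝ} (hq : ∀ i, 0 < q i) (x : ℝ) :
    genInt q x = pointsBelow (prodPow fun i => 1 / q i) x := by
  ext ⟨n, m⟩
  have hP : 0 < m.prod fun i k => q i ^ k := Finset.prod_pos fun i _ => pow_pos (hq i) _
  simp only [genInt, pointsBelow, Set.mem_ofPred_eq, prodPow_one_div, inv_mul_eq_div,
    le_div_iff₀ hP]

theorem density_of_adjoined_generators_general (q : ℕ → ℝ) (hq : ∀ i, 1 < q i)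
    (hsum : Summable (fun i => 1 / q i)) :
    (∀ x : ℝ, (genInt q x).Finite) ∧
    0 < (∏' i : ℕ, (1 - 1 / q i)⁻¹) ∧
    Tendsto (fun x : ℝ => (Nat.card (genInt q x) : ℝ) / x) atTop
      (nhds (∏' i : ℕ, (1 - 1 / q i)⁻¹)) := by
  have hr0 : ∀ i, 0 ≤ 1 / q i := fun i => one_div_nonneg.2 (zero_le_one.trans (hq i).le)
  have hr1 : ∀ i, 1 / q i < 1 := fun i => (div_lt_one (zero_lt_one.trans (hq i))).2 (hq i)
  have hgen : ∀ x, genInt q x = pointsBelow (prodPow fun i => 1 / q i) x :=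
    genInt_eq_pointsBelow fun i => zero_lt_one.trans (hq i)
  have hP := summable_prodPow hr0 hr1 hsum
  rw [← tsum_prodPow hr0 hr1 hsum]
  refine ⟨fun x => hgen x ▸ finite_pointsBelow hP x,
    hP.tsum_pos (prodPow_nonneg hr0) 0 (prodPow_zero.symm ▸ one_pos), ?_⟩
  simpa only [hgen] using tendsto_card_pointsBelow_div (prodPow_nonneg hr0) hP

/-- Adjoining to the usual primes pairwise distinct generators `q_i > 1` with
`Σ_i 1/q_i < ∞` yields generalized integers with finite counting function `N(x)`
and density `∏_i (1 - 1/q_i)⁻¹ ∈ (0, ∞)`. -/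
theorem density_of_adjoined_generators (q : ℕ → ℝ) (hq : ∀ i, 1 < q i)
    (hinj : Function.Injective q) (hsum : Summable (fun i => 1 / q i)) :
    (∀ x : ℝ, (genInt q x).Finite) ∧
    0 < (∏' i : ℕ, (1 - 1 / q i)⁻¹) ∧
    Tendsto (fun x : ℝ => (Nat.card (genInt q x) : ℝ) / x) atTop
      (nhds (∏' i : ℕ, (1 - 1 / q i)⁻¹)) :=
  density_of_adjoined_generators_general q hq hsum
end

section
/- Let (q_i)_{i∈ℕ} be a sequence of reals with q_i > 1 for all i, such that {i : q_i ≤ Y} is finite for every Y, and Σ_i 1/q_i = ∞. For x ≥ 1 let N(x) be the number of pairs (n, m) where n is a positive integer and m : ℕ → ℕ is finitely supported, such that n · ∏_i q_i^{m_i} ≤ x. Then N(x) is finite for every x and N(x)/x → ∞ as x → ∞. -/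
open Filter

/-!
Every exponent vector `m` contributes the `⌊x / ∏ q_i^{m_i}⌋` integers `n` with
`n · ∏ q_i^{m_i} ≤ x`. Restricting to squarefree `m` supported on `{0, …, k-1}` gives
`N(x) ≥ ∑_{T ⊆ range k} ⌊x / ∏_{i ∈ T} q_i⌋ ≥ x ∏_{i < k} (1 + 1/q_i) - 2^k`, and the partial
products `∏_{i < k} (1 + 1/q_i) ≥ 1 + ∑_{i < k} 1/q_i` are unbounded because `∑ 1/q_i` diverges.
Finiteness of `N(x)` comes from `q_j^{m_j} ≤ x`, which confines `j` to the finite set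
`{q_j ≤ x}` and bounds `m_j` by Bernoulli's inequality.
-/

open Finset

theorem Finset.one_add_sum_le_prod_one_add {ι R : Type*} [CommSemiring R] [PartialOrder R]
    [IsOrderedRing R] (s : Finset ι) {f : ι → R} (hf : ∀ i ∈ s, 0 ≤ f i) :
    1 + ∑ i ∈ s, f i ≤ ∏ i ∈ s, (1 + f i) := by
  classical
  induction s using Finset.induction_on with
  | empty => simp
  | insert a s ha ih =>
    rw [sum_insert ha, prod_insert ha]
    have hfa : 0 ≤ f a := hf a (mem_insert_self a s)
    have hsum : 0 ≤ ∑ i ∈ s, f i := sum_nonneg fun i hi => hf i (mem_insert_of_mem hi)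
    calc 1 + (f a + ∑ i ∈ s, f i) = 1 + ∑ i ∈ s, f i + f a * 1 := by ring
      _ ≤ 1 + ∑ i ∈ s, f i + f a * (1 + ∑ i ∈ s, f i) := by
          gcongr
          exact le_add_of_nonneg_right hsum
      _ = (1 + f a) * (1 + ∑ i ∈ s, f i) := by ring
      _ ≤ (1 + f a) * ∏ i ∈ s, (1 + f i) :=
          mul_le_mul_of_nonneg_left (ih fun i hi => hf i (mem_insert_of_mem hi))
            (add_nonneg zero_le_one hfa)

theorem tendsto_prod_one_add_of_not_summable {f : ℕ → ℝ} (hf : ∀ i, 0 ≤ f i)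
    (h : ¬Summable f) : Tendsto (fun n => ∏ i ∈ range n, (1 + f i)) atTop atTop := by
  have hsum := (not_summable_iff_tendsto_nat_atTop_of_nonneg hf).mp h
  refine tendsto_atTop_mono (fun n => ?_) hsum
  calc ∑ i ∈ range n, f i ≤ 1 + ∑ i ∈ range n, f i := le_add_of_nonneg_left zero_le_one
    _ ≤ ∏ i ∈ range n, (1 + f i) := one_add_sum_le_prod_one_add _ fun i _ => hf i

theorem Finset.sub_two_pow_card_le_sum_floor_div_prod {ι : Type*} (s : Finset ι) (q : ι → ℝ)
    (x : ℝ) : x * ∏ i ∈ s, (1 + 1 / q i) - 2 ^ #s ≤ ∑ t ∈ s.powerset, ⌊x / ∏ i ∈ t, q i⌋₊ := by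
  have hexpand : x * ∏ i ∈ s, (1 + 1 / q i) = ∑ t ∈ s.powerset, x / ∏ i ∈ t, q i := by
    simp only [prod_one_add, mul_sum, prod_div_distrib, prod_const_one, mul_one_div]
  have hcard : (2 : ℝ) ^ #s = ∑ _t ∈ s.powerset, 1 := by simp
  rw [hexpand, hcard, ← sum_sub_distrib, Nat.cast_sum]
  exact sum_le_sum fun t _ => (Nat.sub_one_lt_floor _).le

def genProd (q : ℕ → ℝ) (m : ℕ →₀ ℕ) : ℝ :=
  m.prod fun i k => q i ^ k

section

variable {q : ℕ → ℝ}

theorem genProd_toFinsupp (s : Multiset ℕ) :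
    genProd q (Multiset.toFinsupp s) = (s.map q).prod := by
  classical
  simp [genProd, Finsupp.prod, prod_multiset_map_count]

theorem one_le_genProd (hq : ∀ i, 1 ≤ q i) (m : ℕ →₀ ℕ) : 1 ≤ genProd q m :=
  one_le_prod fun i _ => one_le_pow₀ (hq i)

theorem pow_le_genProd (hq : ∀ i, 1 ≤ q i) (m : ℕ →₀ ℕ) (j : ℕ) : q j ^ m j ≤ genProd q m := by
  classical
  rw [genProd, Finsupp.prod_of_support_subset m (subset_insert j m.support) _ fun _ _ => pow_zero _]
  simpa using prod_le_prod_of_subset_of_one_le (f := fun i => q i ^ m i)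
    (singleton_subset_iff.2 (mem_insert_self j m.support))
    (fun i _ => pow_nonneg (zero_le_one.trans (hq i)) _) fun i _ _ => one_le_pow₀ (hq i)

theorem finite_setOf_genProd_le (hq : ∀ i, 1 < q i) (hloc : ∀ Y : ℝ, {i : ℕ | q i ≤ Y}.Finite)
    (x : ℝ) : {m | genProd q m ≤ x}.Finite := by
  classical
  refine (Set.finite_Iic <| Finsupp.indicator (hloc x).toFinset
    fun j _ => ⌊x / (q j - 1)⌋₊).subset fun m hm j => ?_
  rcases Nat.eq_zero_or_pos (m j) with hmj | hmj
  · simp [hmj]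
  have hpow : q j ^ m j ≤ x := (pow_le_genProd (fun i => (hq i).le) m j).trans hm
  have hj : j ∈ (hloc x).toFinset := by
    simpa using (le_self_pow₀ (hq j).le hmj.ne').trans hpow
  rw [Finsupp.indicator_of_mem hj, Nat.le_floor_iff' hmj.ne', le_div_iff₀ (sub_pos.2 (hq j))]
  linarith [one_add_mul_sub_le_pow (by linarith [hq j] : (-1 : ℝ) ≤ q j) (m j)]

theorem genInt_finite (hq : ∀ i, 1 < q i) (hloc : ∀ Y : ℝ, {i : ℕ | q i ≤ Y}.Finite) (x : ℝ) :
    (genInt q x).Finite := by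
  refine ((Set.finite_Icc 1 ⌊x⌋₊).prod (finite_setOf_genProd_le hq hloc x)).subset ?_
  rintro ⟨n, m⟩ ⟨hn, hle⟩
  have hm := one_le_genProd (fun i => (hq i).le) m
  have hn' : (1 : ℝ) ≤ n := by exact_mod_cast hn
  refine ⟨⟨hn, Nat.le_floor ?_⟩, ?_⟩
  · exact (le_mul_of_one_le_right (Nat.cast_nonneg n) hm).trans hle
  · exact (le_mul_of_one_le_left (zero_le_one.trans hm) hn').trans hle

theorem sum_floor_div_genProd_le_card_genInt (hq : ∀ i, 1 < q i)
    (hloc : ∀ Y : ℝ, {i : ℕ | q i ≤ Y}.Finite) (x : ℝ) (S : Finset (ℕ →₀ ℕ)) :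
    ∑ m ∈ S, ⌊x / genProd q m⌋₊ ≤ Nat.card (genInt q x) := by
  classical
  let t := S.biUnion fun m => Icc 1 ⌊x / genProd q m⌋₊ ×ˢ {m}
  have hcard : #t = ∑ m ∈ S, ⌊x / genProd q m⌋₊ := by
    rw [card_biUnion]
    · simp
    · intro m _ m' _ hne
      simp only [Function.onFun, disjoint_left, mem_product, mem_singleton]
      exact fun _ h h' => hne (h.2.symm.trans h'.2)
  have hsub : (t : Set (ℕ × (ℕ →₀ ℕ))) ⊆ genInt q x := by
    rintro ⟨n, m⟩ hp
    simp only [t, coe_biUnion, Set.mem_iUnion, mem_coe, mem_product, mem_Icc,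
      mem_singleton] at hp
    obtain ⟨_, -, ⟨hn, hnx⟩, rfl⟩ := hp
    have hm := zero_lt_one.trans_le (one_le_genProd (fun i => (hq i).le) m)
    rw [Nat.le_floor_iff' (by omega), le_div_iff₀ hm] at hnx
    exact ⟨hn, hnx⟩
  rw [← hcard, ← Nat.card_eq_finsetCard]
  exact Nat.card_mono (genInt_finite hq hloc x) hsub

theorem sub_two_pow_card_le_card_genInt (hq : ∀ i, 1 < q i)
    (hloc : ∀ Y : ℝ, {i : ℕ | q i ≤ Y}.Finite) (x : ℝ) (s : Finset ℕ) :
    x * ∏ i ∈ s, (1 + 1 / q i) - 2 ^ #s ≤ Nat.card (genInt q x) := by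
  have hinj : Set.InjOn (fun t : Finset ℕ => Multiset.toFinsupp t.val) s.powerset :=
    (Multiset.toFinsupp.injective.comp val_injective).injOn
  have hsum := sum_floor_div_genProd_le_card_genInt hq hloc x (s.powerset.image
    fun t => Multiset.toFinsupp t.val)
  rw [sum_image hinj] at hsum
  simp only [genProd_toFinsupp] at hsum
  exact (s.sub_two_pow_card_le_sum_floor_div_prod q x).trans (by exact_mod_cast hsum)

end

/-- Adjoining to the usual primes a locally finite family of generators `q_i > 1` with
`Σ_i 1/q_i = ∞` yields generalized integers whose counting function `N(x)` is finite
for every `x` but satisfies `N(x)/x → ∞`. -/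
theorem density_infinite_of_adjoined_generators (q : ℕ → ℝ) (hq : ∀ i, 1 < q i)
    (hloc : ∀ Y : ℝ, {i : ℕ | q i ≤ Y}.Finite)
    (hdiv : ¬ Summable (fun i => 1 / q i)) :
    (∀ x : ℝ, (genInt q x).Finite) ∧
    Tendsto (fun x : ℝ => (Nat.card (genInt q x) : ℝ) / x) atTop atTop := by
  refine ⟨genInt_finite hq hloc, tendsto_atTop.2 fun C => ?_⟩
  have hprod := tendsto_prod_one_add_of_not_summable
    (fun i => one_div_nonneg.2 (zero_le_one.trans (hq i).le)) hdiv
  obtain ⟨k, hk⟩ := (hprod.eventually_ge_atTop (C + 1)).exists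
  filter_upwards [eventually_ge_atTop ((2 : ℝ) ^ k), eventually_gt_atTop 0] with x hx hx0
  rw [le_div_iff₀ hx0]
  calc C * x ≤ x * (C + 1) - 2 ^ k := by linarith
    _ ≤ x * ∏ i ∈ range k, (1 + 1 / q i) - 2 ^ #(range k) := by
        rw [card_range]
        gcongr
    _ ≤ Nat.card (genInt q x) := sub_two_pow_card_le_card_genInt hq hloc x (range k)
end

section
/- Let F be a finite set of (usual) prime numbers and let s_1, …, s_k be reals with s_j > 1 for each j. For x ≥ 1 let N(x) be the number of pairs (n, m) where n is a positive integer having no prime factor in F and m : {1,…,k} → ℕ, such that n · ∏_{j=1}^k s_j^{m_j} ≤ x. Then N(x)/x → ∏_{j=1}^k (1 − 1/s_j)^{−1} · ∏_{p∈F} (1 − 1/p) as x → ∞. -/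
open Filter Topology

/-!
Deleting a prime `p` removes exactly the multiples of `p`, which are counted by `N(x / p)`; so
`N_{F ∪ {p}}(x) = N_F(x) - N_F(x / p)` and the density gains the factor `1 - 1/p`. Adjoining a
generator `r > 1` gives, after splitting by the exponent of `r`, `N(x) = ∑ₘ N'(x / rᵐ)`. Since
`N'(y) ≤ C y` for all `y ≥ 0`, dominated convergence (Tannery's theorem) turns the densities of
the terms into the geometric factor `∑ₘ r⁻ᵐ = (1 - 1/r)⁻¹`. Induction on `k` and on `F`, starting
from `⌊x⌋₊ / x → 1`, gives the theorem.
-/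

theorem Set.Finite.ncard_eq_tsum_ncard_fiber {α β : Type*} {T : Set α} (hT : T.Finite)
    (f : α → β) : (T.ncard : ℝ) = ∑' b, ({a ∈ T | f a = b}.ncard : ℝ) := by
  classical
  rw [tsum_eq_sum (s := hT.toFinset.image f), Set.ncard_eq_toFinset_card T hT,
    Finset.card_eq_sum_card_image f, Nat.cast_sum]
  · refine Finset.sum_congr rfl fun b _ => ?_
    rw [← Set.ncard_coe_finset, Finset.coe_filter]
    simp only [Set.Finite.mem_toFinset]
  · intro b hb
    rw [Nat.cast_eq_zero, Set.ncard_eq_zero (hT.subset (Set.sep_subset _ _))]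
    ext a
    simp only [Finset.mem_image, Set.Finite.mem_toFinset, not_exists, not_and] at hb
    simpa using hb a

theorem one_le_prod_pow {ι : Type*} [Fintype ι] {s : ι → ℝ} (hs : ∀ i, 1 ≤ s i)
    (ν : ι → ℕ) : 1 ≤ ∏ i, s i ^ ν i :=
  Finset.one_le_prod fun i _ => one_le_pow₀ (hs i)

theorem pow_le_prod_pow {ι : Type*} [Fintype ι] {s : ι → ℝ} (hs : ∀ i, 1 ≤ s i) (ν : ι → ℕ)
    (j : ι) : s j ^ ν j ≤ ∏ i, s i ^ ν i := by
  classical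
  rw [← Finset.mul_prod_erase _ _ (Finset.mem_univ j)]
  exact le_mul_of_one_le_right (zero_le_one.trans (one_le_pow₀ (hs j)))
    (Finset.one_le_prod fun i _ => one_le_pow₀ (hs i))

theorem exists_le_mul_of_tendsto_div {g : ℝ → ℝ} {c : ℝ} (hmono : Monotone g)
    (hzero : ∀ y < 1, g y = 0) (hlim : Tendsto (fun y => g y / y) atTop (𝓝 c)) :
    ∃ C, ∀ y, 0 ≤ y → g y ≤ C * y := by
  obtain ⟨T, hT⟩ := (hlim.eventually (eventually_le_nhds (lt_add_one c))).exists_forall_of_atTop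
  set T' := max T 1
  have hgT' : 0 ≤ g T' := (hzero 0 one_pos).symm.le.trans (hmono (by positivity))
  refine ⟨max (c + 1) (g T'), fun y hy => ?_⟩
  rcases lt_or_ge y 1 with hy1 | hy1
  · rw [hzero y hy1]
    exact mul_nonneg (hgT'.trans (le_max_right _ _)) hy
  rcases lt_or_ge y T' with hyT | hyT
  · calc g y ≤ g T' := hmono hyT.le
      _ ≤ g T' * y := le_mul_of_one_le_right hgT' hy1
      _ ≤ max (c + 1) (g T') * y := by gcongr; exact le_max_right _ _
  · have := hT y ((le_max_left T 1).trans hyT)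
    rw [div_le_iff₀ (by linarith)] at this
    exact this.trans (by gcongr; exact le_max_left _ _)

theorem tendsto_sub_comp_div_div {f : ℝ → ℝ} {c p : ℝ} (hp : 0 < p)
    (hf : Tendsto (fun x => f x / x) atTop (𝓝 c)) :
    Tendsto (fun x => (f x - f (x / p)) / x) atTop (𝓝 (c * (1 - 1 / p))) := by
  have hlim := hf.sub ((hf.comp (tendsto_id.atTop_div_const hp)).mul_const (1 / p))
  rw [mul_one_sub]
  refine hlim.congr' ?_
  filter_upwards [eventually_gt_atTop 0] with x hx
  simp only [Function.comp_apply, id]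
  field_simp

theorem tendsto_tsum_comp_div_pow_div {g : ℝ → ℝ} {c r : ℝ} (hr : 1 < r)
    (hmono : Monotone g) (hzero : ∀ y < 1, g y = 0)
    (hlim : Tendsto (fun y => g y / y) atTop (𝓝 c)) :
    Tendsto (fun x => (∑' m : ℕ, g (x / r ^ m)) / x) atTop (𝓝 ((1 - 1 / r)⁻¹ * c)) := by
  obtain ⟨C, hC⟩ := exists_le_mul_of_tendsto_div hmono hzero hlim
  have hr0 : 0 < r := one_pos.trans hr
  have hinv0 : 0 ≤ r⁻¹ := inv_nonneg.2 hr0.le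
  have hinv1 : r⁻¹ < 1 := inv_lt_one_of_one_lt₀ hr
  have hterm (m : ℕ) : Tendsto (fun x => g (x / r ^ m) / x) atTop (𝓝 (c * r⁻¹ ^ m)) := by
    refine ((hlim.comp (tendsto_id.atTop_div_const (pow_pos hr0 m))).mul_const (r⁻¹ ^ m)).congr'
      ?_
    filter_upwards [eventually_gt_atTop 0] with x hx
    simp only [Function.comp_apply, id, inv_pow]
    field_simp
  have hbound : ∀ᶠ x in atTop, ∀ m : ℕ, ‖g (x / r ^ m) / x‖ ≤ C * r⁻¹ ^ m := by
    filter_upwards [eventually_gt_atTop 0] with x hx m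
    have hg0 : 0 ≤ g (x / r ^ m) :=
      (hzero 0 one_pos).symm.le.trans (hmono (by positivity))
    rw [Real.norm_of_nonneg (by positivity), div_le_iff₀ hx, inv_pow]
    calc g (x / r ^ m) ≤ C * (x / r ^ m) := hC _ (by positivity)
      _ = C * (r ^ m)⁻¹ * x := by ring
  have hsum := tendsto_tsum_of_dominated_convergence
    ((summable_geometric_of_lt_one hinv0 hinv1).mul_left C) hterm hbound
  rw [tsum_mul_left, tsum_geometric_of_lt_one hinv0 hinv1] at hsum
  rw [one_div, mul_comm]
  simpa only [tsum_div_const] using hsum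

def beurlingSet (F : Finset ℕ) {k : ℕ} (s : Fin k → ℝ) (x : ℝ) : Set (ℕ × (Fin k → ℕ)) :=
  {p | 1 ≤ p.1 ∧ (∀ q ∈ F, ¬ q ∣ p.1) ∧ (p.1 : ℝ) * ∏ j, s j ^ p.2 j ≤ x}

noncomputable def beurlingCount (F : Finset ℕ) {k : ℕ} (s : Fin k → ℝ) (x : ℝ) : ℝ :=
  (beurlingSet F s x).ncard

section Counting

variable (F : Finset ℕ) {k : ℕ}

theorem le_of_mem_beurlingSet {s : Fin k → ℝ} (hs : ∀ j, 1 ≤ s j) {x : ℝ}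
    {a : ℕ × (Fin k → ℕ)} (ha : a ∈ beurlingSet F s x) :
    (a.1 : ℝ) ≤ x ∧ ∀ j, s j ^ a.2 j ≤ x := by
  obtain ⟨hn, -, hx⟩ := ha
  have hn1 : (1 : ℝ) ≤ a.1 := by exact_mod_cast hn
  have hprod := one_le_prod_pow hs a.2
  refine ⟨by nlinarith, fun j => ?_⟩
  nlinarith [pow_le_prod_pow hs a.2 j]

theorem beurlingSet_finite {s : Fin k → ℝ} (hs : ∀ j, 1 < s j) (x : ℝ) :
    (beurlingSet F s x).Finite := by
  choose B hB using fun j => pow_unbounded_of_one_lt x (hs j)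
  refine ((Set.finite_Iic ⌊x⌋₊).prod (Set.Finite.pi' fun j => Set.finite_Iio (B j))).subset ?_
  intro a ha
  obtain ⟨hn, hν⟩ := le_of_mem_beurlingSet F (fun j => (hs j).le) ha
  exact ⟨Nat.le_floor hn, fun j => (pow_lt_pow_iff_right₀ (hs j)).1 ((hν j).trans_lt (hB j))⟩

theorem beurlingCount_mono {s : Fin k → ℝ} (hs : ∀ j, 1 < s j) :
    Monotone (beurlingCount F s) :=
  fun _ y hxy => Nat.cast_le.2 <| Set.ncard_le_ncard
    (fun _ ⟨hn, hF, hx⟩ => ⟨hn, hF, hx.trans hxy⟩) (beurlingSet_finite F hs y)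

theorem beurlingCount_of_lt_one {s : Fin k → ℝ} (hs : ∀ j, 1 < s j) {x : ℝ} (hx : x < 1) :
    beurlingCount F s x = 0 := by
  rw [beurlingCount, Nat.cast_eq_zero, Set.ncard_eq_zero (beurlingSet_finite F hs x)]
  refine Set.eq_empty_of_forall_notMem fun a ha => ?_
  have hn : (1 : ℝ) ≤ a.1 := by exact_mod_cast ha.1
  linarith [(le_of_mem_beurlingSet F (fun j => (hs j).le) ha).1]

theorem image_mul_beurlingSet_div {s : Fin k → ℝ} {p : ℕ} (hp : p ≠ 0)
    (hcop : ∀ q ∈ F, q.Coprime p) (x : ℝ) :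
    Prod.map (p * ·) id '' beurlingSet F s (x / p) = {a ∈ beurlingSet F s x | p ∣ a.1} := by
  have hp0 : (0 : ℝ) < p := by positivity
  ext ⟨n, ν⟩
  constructor
  · rintro ⟨⟨m, ν⟩, ⟨hm, hF, hmx⟩, h⟩
    simp only [Prod.map, Prod.mk.injEq] at h
    obtain ⟨rfl, rfl⟩ := h
    refine ⟨⟨Nat.one_le_iff_ne_zero.2 (by positivity), fun q hq hqpm => hF q hq
      ((hcop q hq).dvd_of_dvd_mul_left hqpm), ?_⟩, dvd_mul_right p m⟩
    rw [le_div_iff₀ hp0] at hmx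
    simp only [id, Nat.cast_mul]
    linarith [mul_right_comm ((m : ℝ) * ∏ j, s j ^ ν j) p]
  · rintro ⟨⟨hn, hF, hnx⟩, m, rfl⟩
    refine ⟨(m, ν), ⟨Nat.one_le_iff_ne_zero.2 (by rintro rfl; simp at hn),
      fun q hq hqm => hF q hq (hqm.mul_left p), ?_⟩, rfl⟩
    rw [le_div_iff₀ hp0]
    push_cast at hnx
    linarith

theorem beurlingCount_insert {s : Fin k → ℝ} (hs : ∀ j, 1 < s j) {p : ℕ} (hp : p ≠ 0)
    (hcop : ∀ q ∈ F, q.Coprime p) (x : ℝ) :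
    beurlingCount (insert p F) s x = beurlingCount F s x - beurlingCount F s (x / p) := by
  set T := beurlingSet F s x
  have hsplit : T = beurlingSet (insert p F) s x ∪ {a ∈ T | p ∣ a.1} := by
    ext ⟨n, ν⟩
    simp only [T, beurlingSet, Set.mem_union, Set.mem_ofPred_eq, Finset.mem_insert,
      forall_eq_or_imp]
    tauto
  have hdisj : Disjoint (beurlingSet (insert p F) s x) {a ∈ T | p ∣ a.1} := by
    rw [Set.disjoint_left]
    rintro a ⟨-, hF, -⟩ ⟨-, hdvd⟩
    exact hF p (Finset.mem_insert_self p F) hdvd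
  have hinj : Function.Injective (Prod.map (p * ·) id : ℕ × (Fin k → ℕ) → _) :=
    (mul_right_injective₀ hp).prodMap Function.injective_id
  have hcard : T.ncard =
      (beurlingSet (insert p F) s x).ncard + (beurlingSet F s (x / p)).ncard := by
    rw [← Set.ncard_image_of_injective (beurlingSet F s (x / p)) hinj,
      image_mul_beurlingSet_div F hp hcop x]
    conv_lhs => rw [hsplit]
    exact Set.ncard_union_eq hdisj (beurlingSet_finite _ hs x) ((beurlingSet_finite F hs x).sep _)
  simp only [beurlingCount, hcard, T]
  push_cast
  ring

theorem beurlingCount_succ {s : Fin (k + 1) → ℝ} (hs : ∀ j, 1 < s j) (x : ℝ) :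
    beurlingCount F s x = ∑' m : ℕ, beurlingCount F (Fin.tail s) (x / s 0 ^ m) := by
  rw [beurlingCount, (beurlingSet_finite F hs x).ncard_eq_tsum_ncard_fiber (fun a => a.2 0)]
  congr 1
  ext m
  have hfiber : beurlingSet F (Fin.tail s) (x / s 0 ^ m) =
      Prod.map id (Fin.cons m) ⁻¹' {a ∈ beurlingSet F s x | a.2 0 = m} := by
    ext ⟨n, ν⟩
    simp only [beurlingSet, Set.mem_preimage, Set.mem_ofPred_eq, Prod.map, id,
      Fin.prod_univ_succ, Fin.cons_zero, Fin.cons_succ, Fin.tail, and_true]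
    rw [le_div_iff₀ (pow_pos (one_pos.trans (hs 0)) m), mul_comm (s 0 ^ m), mul_assoc]
  have hrange :
      {a ∈ beurlingSet F s x | a.2 0 = m} ⊆ Set.range (Prod.map id (Fin.cons m)) := by
    rintro ⟨n, ν⟩ ⟨-, rfl⟩
    exact ⟨(n, Fin.tail ν), by simp⟩
  rw [beurlingCount, hfiber, Set.ncard_preimage_of_injective_subset_range
    (Function.injective_id.prodMap (Fin.cons_right_injective (α := fun _ => ℕ) m)) hrange]

theorem beurlingCount_empty_fin_zero (s : Fin 0 → ℝ) (x : ℝ) :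
    beurlingCount ∅ s x = ⌊x⌋₊ := by
  have himage : Prod.fst '' beurlingSet ∅ s x = Set.Icc 1 ⌊x⌋₊ := by
    ext n
    simp only [beurlingSet, Set.mem_image, Set.mem_ofPred_eq, Finset.notMem_empty,
      IsEmpty.forall_iff, implies_true, Finset.univ_eq_empty, Finset.prod_empty, mul_one,
      true_and, Prod.exists, exists_and_right, exists_eq_right, exists_const, Set.mem_Icc]
    exact and_congr_right fun hn => (Nat.le_floor_iff' (by omega)).symm
  rw [beurlingCount, ← Set.ncard_image_of_injective _ Prod.fst_injective, himage,
    ← Finset.coe_Icc, Set.ncard_coe_finset, Nat.card_Icc, Nat.add_sub_cancel]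

end Counting

theorem tendsto_beurlingCount_empty_div {k : ℕ} (s : Fin k → ℝ) (hs : ∀ j, 1 < s j) :
    Tendsto (fun x => beurlingCount ∅ s x / x) atTop (𝓝 (∏ j, (1 - 1 / s j)⁻¹)) := by
  induction k with
  | zero => simpa only [beurlingCount_empty_fin_zero, Finset.univ_eq_empty, Finset.prod_empty]
      using tendsto_nat_floor_div_atTop
  | succ k ih =>
    have hs' : ∀ j, 1 < Fin.tail s j := fun j => hs j.succ
    rw [Fin.prod_univ_succ]
    refine (tendsto_tsum_comp_div_pow_div (hs 0) (beurlingCount_mono ∅ hs')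
      (fun _ => beurlingCount_of_lt_one ∅ hs') (ih (Fin.tail s) hs')).congr fun x => ?_
    rw [beurlingCount_succ ∅ hs]

theorem tendsto_beurlingCount_div (F : Finset ℕ) (hF : ∀ p ∈ F, p.Prime) {k : ℕ}
    (s : Fin k → ℝ) (hs : ∀ j, 1 < s j) :
    Tendsto (fun x => beurlingCount F s x / x) atTop
      (𝓝 ((∏ j, (1 - 1 / s j)⁻¹) * ∏ p ∈ F, (1 - 1 / (p : ℝ)))) := by
  induction F using Finset.induction_on with
  | empty => simpa only [Finset.prod_empty, mul_one] using tendsto_beurlingCount_empty_div s hs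
  | @insert p F hpF ih =>
    have hp : p.Prime := hF p (Finset.mem_insert_self p F)
    have hprimes : ∀ q ∈ F, q.Prime := fun q hq => hF q (Finset.mem_insert_of_mem hq)
    have hcop : ∀ q ∈ F, q.Coprime p := fun q hq =>
      (Nat.coprime_primes (hprimes q hq) hp).2 fun h => hpF (h ▸ hq)
    rw [Finset.prod_insert hpF, mul_comm (1 - 1 / (p : ℝ)), ← mul_assoc]
    refine (tendsto_sub_comp_div_div (by exact_mod_cast hp.pos) (ih hprimes)).congr fun x => ?_
    rw [beurlingCount_insert F hs hp.ne_zero hcop]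

/-- Deleting a finite set `F` of usual primes and adjoining finitely many generators
`s_1, …, s_k > 1` yields generalized integers with density
`∏_j (1 - 1/s_j)⁻¹ · ∏_{p∈F} (1 - 1/p)`. Here `N(x)` counts pairs `(n, m)` with
`n ≥ 1` having no prime factor in `F`, `m : Fin k → ℕ`, and `n · ∏_j s_j^{m_j} ≤ x`. -/
theorem density_of_finite_modification (F : Finset ℕ) (hF : ∀ p ∈ F, Nat.Prime p)
    (k : ℕ) (s : Fin k → ℝ) (hs : ∀ j, 1 < s j) :
    Tendsto (fun x : ℝ =>
        (Nat.card {p : ℕ × (Fin k → ℕ) |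
            1 ≤ p.1 ∧ (∀ q ∈ F, ¬ q ∣ p.1) ∧
            (p.1 : ℝ) * ∏ j : Fin k, s j ^ p.2 j ≤ x} : ℝ) / x)
      atTop
      (nhds ((∏ j : Fin k, (1 - 1 / s j)⁻¹) * ∏ p ∈ F, (1 - 1 / (p : ℝ)))) := by
  simpa only [beurlingCount, beurlingSet, Nat.card_coe_set_eq] using
    tendsto_beurlingCount_div F hF s hs
end

section
/- Let g ∈ L¹(ℝ) and ε > 0. Then there exists h ∈ L¹(ℝ) such that for every t ∈ ℝ, (1 + i t) · ( ∫_ℝ e^{−i u t} g(u) du ) · e^{−ε² t²/2} = ∫_ℝ e^{−i u t} h(u) du. -/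
/-!
The multiplier `(1 + it)·e^{-ε²t²/2}` is itself the Fourier transform of an `L¹` function:
for the Gaussian `γ(u) = e^{-u²/(2ε²)}`, whose transform is `K·e^{-ε²t²/2}`, differentiation
turns into multiplication by `it`, so `(γ + γ')/K` has transform `(1 + it)·e^{-ε²t²/2}`.
By the convolution theorem `h = g ⋆ (γ + γ')/K` does the job.
-/

open MeasureTheory Complex Real FourierTransform Convolution

theorem integral_cexp_neg_I_mul_mul_eq_fourier (f : ℝ → ℂ) (t : ℝ) :
    ∫ u : ℝ, cexp (-(I * u * t)) * f u = 𝓕 f (t / (2 * π)) := by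
  rw [Real.fourier_real_eq_integral_exp_smul]
  congr 1 with u
  rw [smul_eq_mul]
  congr 2
  push_cast
  field_simp

theorem Real.fourier_add_deriv {E : Type*} [NormedAddCommGroup E] [NormedSpace ℂ E]
    [CompleteSpace E] {f : ℝ → E} (hf : Integrable f) (hf_diff : Differentiable ℝ f)
    (hf' : Integrable (deriv f)) (ξ : ℝ) :
    𝓕 (f + deriv f) ξ = (1 + 2 * π * I * ξ) • 𝓕 f ξ := by
  have hadd : 𝓕 (f + deriv f) = 𝓕 f + 𝓕 (deriv f) :=
    VectorFourier.fourierIntegral_add continuous_fourierChar (by fun_prop) hf hf'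
  rw [hadd, Pi.add_apply, Real.fourier_deriv hf hf_diff hf', add_smul, one_smul]

section Gaussian

variable {b : ℂ}

theorem hasDerivAt_cexp_neg_mul_sq (b : ℂ) (x : ℝ) :
    HasDerivAt (fun x : ℝ => cexp (-b * x ^ 2)) (-2 * b * x * cexp (-b * x ^ 2)) x := by
  have h := (((hasDerivAt_pow 2 (x : ℂ)).const_mul (-b)).cexp).comp_ofReal
  convert h using 1
  push_cast
  ring

theorem deriv_cexp_neg_mul_sq (b : ℂ) :
    deriv (fun x : ℝ => cexp (-b * x ^ 2)) = fun x : ℝ => -2 * b * x * cexp (-b * x ^ 2) :=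
  funext fun x => (hasDerivAt_cexp_neg_mul_sq b x).deriv

theorem integrable_deriv_cexp_neg_mul_sq (hb : 0 < b.re) :
    Integrable (deriv fun x : ℝ => cexp (-b * x ^ 2)) := by
  rw [deriv_cexp_neg_mul_sq]
  simpa only [mul_assoc] using (integrable_mul_cexp_neg_mul_sq hb).const_mul (-2 * b)

theorem fourier_cexp_neg_mul_sq_div_two_pi (hb : 0 < b.re) (t : ℝ) :
    𝓕 (fun x : ℝ => cexp (-b * x ^ 2)) (t / (2 * π)) =
      (π / b) ^ (1 / 2 : ℂ) * cexp (-t ^ 2 / (4 * b)) := by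
  rw [← integral_cexp_neg_I_mul_mul_eq_fourier]
  convert fourierIntegral_gaussian hb (-t) using 3 with u
  · ring_nf
  · ring

end Gaussian

theorem exists_integrable_fourier_div_two_pi_eq_one_add_I_mul_mul_gaussian {ε : ℝ}
    (hε : ε ≠ 0) :
    ∃ m : ℝ → ℂ, Integrable m ∧ ∀ t : ℝ,
      𝓕 m (t / (2 * π)) = (1 + I * t) * cexp (-(ε ^ 2 * t ^ 2) / 2) := by
  set b : ℂ := (((2 * ε ^ 2)⁻¹ : ℝ) : ℂ)
  have hb : 0 < b.re := by simp only [b, ofReal_re]; positivity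
  set γ : ℝ → ℂ := fun x => cexp (-b * x ^ 2)
  have hγ : Integrable γ := integrable_cexp_neg_mul_sq hb
  have hγ' : Integrable (deriv γ) := integrable_deriv_cexp_neg_mul_sq hb
  have hγ_diff : Differentiable ℝ γ := fun x =>
    (hasDerivAt_cexp_neg_mul_sq b x).differentiableAt
  set K : ℂ := (π / b) ^ (1 / 2 : ℂ)
  have hK : K ≠ 0 := by
    have : (π : ℂ) / b ≠ 0 := div_ne_zero (ofReal_ne_zero.mpr pi_ne_zero) (by simp [b, hε])
    simp [K, cpow_eq_zero_iff, this]
  refine ⟨K⁻¹ • (γ + deriv γ), (hγ.add hγ').smul K⁻¹, fun t => ?_⟩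
  have hsmul : 𝓕 (K⁻¹ • (γ + deriv γ)) = K⁻¹ • 𝓕 (γ + deriv γ) :=
    VectorFourier.fourierIntegral_const_smul _ _ _ _ _
  rw [hsmul, Pi.smul_apply, Real.fourier_add_deriv hγ hγ_diff hγ',
    fourier_cexp_neg_mul_sq_div_two_pi hb, smul_eq_mul, smul_eq_mul]
  have hfreq : 2 * π * I * ((t / (2 * π) : ℝ) : ℂ) = I * t := by
    push_cast
    field_simp [ofReal_ne_zero.mpr pi_ne_zero]
  have hexp : -(t : ℂ) ^ 2 / (4 * b) = -(ε ^ 2 * t ^ 2) / 2 := by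
    simp only [b]
    push_cast
    field_simp
    ring
  rw [hfreq, hexp, inv_mul_eq_iff_eq_mul₀ hK]
  ring

/-- Multiplication by `(1 + it)·e^{-ε²t²/2}` preserves membership in the Wiener
algebra `ℱL¹(ℝ)`: for `g ∈ L¹(ℝ)` and `ε > 0` there is `h ∈ L¹(ℝ)` with
`(1 + it)·ĝ(t)·e^{-ε²t²/2} = ĥ(t)` for every `t`. -/
theorem wiener_algebra_gaussian_multiplier (g : ℝ → ℂ) (hg : Integrable g)
    (ε : ℝ) (hε : 0 < ε) :
    ∃ h : ℝ → ℂ, Integrable h ∧ ∀ t : ℝ,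
      (1 + Complex.I * t) * (∫ u : ℝ, Complex.exp (-(Complex.I * u * t)) * g u) *
          (Real.exp (-(ε ^ 2 * t ^ 2) / 2) : ℝ) =
        ∫ u : ℝ, Complex.exp (-(Complex.I * u * t)) * h u := by
  obtain ⟨m, hm, hm_fourier⟩ :=
    exists_integrable_fourier_div_two_pi_eq_one_add_I_mul_mul_gaussian hε.ne'
  refine ⟨g ⋆[ContinuousLinearMap.mul ℂ ℂ] m, hg.integrable_convolution _ hm, fun t => ?_⟩
  rw [integral_cexp_neg_I_mul_mul_eq_fourier, integral_cexp_neg_I_mul_mul_eq_fourier,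
    Real.fourier_mul_convolution_eq hg hm, hm_fourier]
  push_cast
  ring
end
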